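/- If T is a tree on n vertices (n ≥ 2) and T is not isomorphic to the star S_n, then M_1(T) < M_1(S_n) = (n-1)^2 + (n-1). -/

import Mathlib

open scoped Classical
noncomputable def M1 {V : Type*} [Fintype V] (G : SimpleGraph V) : ℕ :=
  ∑ v, G.degree v ^ 2
noncomputable def M2 {V : Type*} [Fintype V] (G : SimpleGraph V) : ℕ :=
  ∑ e ∈ G.edgeFinset,
    Sym2.lift ⟨fun u v => G.degree u * G.degree v, fun _ _ => Nat.mul_comm _ _⟩ e
noncomputable def numEdges {V : Type*} [Fintype V] (G : SimpleGraph V) : ℕ :=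
  G.edgeFinset.card
def IsKCyclic {V : Type*} [Fintype V] (k : ℕ) (G : SimpleGraph V) : Prop :=
  G.Connected ∧ G.edgeFinset.card + 1 = Fintype.card V + k
def starGraph (n : ℕ) : SimpleGraph (Fin n) :=
  { Adj := fun u v => u ≠ v ∧ (u.val = 0 ∨ v.val = 0)
    symm := by constructor; intro u v h; exact ⟨h.1.symm, h.2.symm⟩
    loopless := by constructor; intro u h; exact h.1 rfl }
def joinG {α β : Type*} (G : SimpleGraph α) (H : SimpleGraph β) : SimpleGraph (α ⊕ β) :=
  { Adj := fun u v =>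
      match u, v with
      | Sum.inl a, Sum.inl b => G.Adj a b
      | Sum.inr a, Sum.inr b => H.Adj a b
      | Sum.inl _, Sum.inr _ => True
      | Sum.inr _, Sum.inl _ => True
    symm := by
      constructor; intro u v h
      cases u <;> cases v <;> simp_all [SimpleGraph.adj_comm]
    loopless := by
      constructor; intro u h
      cases u <;> simp_all }
noncomputable def deleteS {V : Type*} [Fintype V] (G : SimpleGraph V) (S : Finset V) :
    SimpleGraph ↥((↑S : Set V)ᶜ) :=
  G.induce ((↑S : Set V)ᶜ)
def QuasiKCyclic {V : Type*} [Fintype V] (k p : ℕ) (G : SimpleGraph V) : Prop :=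
  G.Connected ∧
  (∃ S : Finset V, S.card = p ∧ IsKCyclic k (deleteS G S)) ∧
  ∀ S' : Finset V, IsKCyclic k (deleteS G S') → p ≤ S'.card
def Un3 (n : ℕ) : SimpleGraph (Fin n) :=
  { Adj := fun u v => u ≠ v ∧ (u.val = 0 ∨ v.val = 0 ∨ (u.val ≤ 2 ∧ v.val ≤ 2))
    symm := by constructor; intro u v h; tauto
    loopless := by constructor; intro u h; exact h.1 rfl }
def Bn33 (n : ℕ) : SimpleGraph (Fin n) :=
  { Adj := fun u v => u ≠ v ∧ (u.val = 0 ∨ v.val = 0 ∨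
      (1 ≤ u.val ∧ u.val ≤ 2 ∧ 1 ≤ v.val ∧ v.val ≤ 2) ∨
      (3 ≤ u.val ∧ u.val ≤ 4 ∧ 3 ≤ v.val ∧ v.val ≤ 4))
    symm := by constructor; intro u v h; tauto
    loopless := by constructor; intro u h; exact h.1 rfl }

/-!
In a tree that is not a star every degree lies in `[1, n - 2]`: a vertex of degree `n - 1` in an
acyclic graph forces the star, as two of its other neighbours that are adjacent would span a
triangle. Summing `(d - 1) (n - 2 - d) ≥ 0` over all vertices with `∑ d = 2 (n - 1)` gives
`M1(T) ≤ (n - 1)^2 + 1`, which is below `M1(S_n) = (n - 1)^2 + (n - 1)` since `n ≥ 3`.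
-/

open scoped Finset

theorem SimpleGraph.IsAcyclic.eq_starGraph_of_isUniversal {V : Type*} {G : SimpleGraph V}
    (hG : G.IsAcyclic) {r : V} (hr : G.IsUniversal r) : G = SimpleGraph.starGraph r := by
  ext u w
  rw [SimpleGraph.starGraph_adj]
  refine ⟨fun h => ⟨h.ne, ?_⟩, ?_⟩
  · by_contra! hne
    exact hG.cliqueFree le_rfl _
      (SimpleGraph.is3Clique_triple_iff.mpr ⟨hr hne.1.symm, hr hne.2.symm, h⟩)
  · rintro ⟨hne, rfl | rfl⟩
    · exact hr hne
    · exact (hr hne.symm).symm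

def SimpleGraph.Iso.starGraph {V W : Type*} (e : V ≃ W) (r : V) :
    SimpleGraph.starGraph r ≃g SimpleGraph.starGraph (e r) where
  toEquiv := e
  map_rel_iff' := by simp [e.injective.eq_iff]

theorem starGraph_eq_starGraph_zero {n : ℕ} (hn : 0 < n) :
    starGraph n = SimpleGraph.starGraph (⟨0, hn⟩ : Fin n) := by
  ext u w
  simp [starGraph, Fin.ext_iff]

theorem nonempty_iso_starGraph_card {V : Type*} [Fintype V] (r : V) :
    Nonempty (SimpleGraph.starGraph r ≃g starGraph (Fintype.card V)) := by
  have hpos : 0 < Fintype.card V := Fintype.card_pos_iff.mpr ⟨r⟩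
  let e := (Fintype.equivFin V).trans (Equiv.swap (Fintype.equivFin V r) ⟨0, hpos⟩)
  have he : e r = ⟨0, hpos⟩ := by simp [e]
  rw [starGraph_eq_starGraph_zero hpos, ← he]
  exact ⟨SimpleGraph.Iso.starGraph e r⟩

theorem M1_eq_sum_degree_sq {V : Type*} [Fintype V] (G : SimpleGraph V) [DecidableRel G.Adj] :
    M1 G = ∑ v, G.degree v ^ 2 := by
  unfold M1
  congr!

theorem M1_starGraph_center {V : Type*} [Fintype V] (r : V) :
    M1 (SimpleGraph.starGraph r) = (Fintype.card V - 1) ^ 2 + (Fintype.card V - 1) := by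
  classical
  rw [M1_eq_sum_degree_sq, ← Finset.add_sum_erase _ _ (Finset.mem_univ r),
    SimpleGraph.degree_starGraph_center,
    Finset.sum_congr rfl fun v hv => by
      rw [SimpleGraph.degree_starGraph_of_ne_center (Finset.ne_of_mem_erase hv)]]
  simp

theorem M1_starGraph (n : ℕ) : M1 (starGraph n) = (n - 1) ^ 2 + (n - 1) := by
  rcases Nat.eq_zero_or_pos n with rfl | hn
  · simp [M1]
  · rw [starGraph_eq_starGraph_zero hn, M1_starGraph_center, Fintype.card_fin]

theorem Finset.sum_sq_le_of_mem_Icc {ι R : Type*} [CommRing R] [LinearOrder R]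
    [IsStrictOrderedRing R] (s : Finset ι) (f : ι → R) {a b : R}
    (h : ∀ i ∈ s, f i ∈ Set.Icc a b) :
    ∑ i ∈ s, f i ^ 2 ≤ (a + b) * ∑ i ∈ s, f i - #s * (a * b) := by
  calc ∑ i ∈ s, f i ^ 2 ≤ ∑ i ∈ s, ((a + b) * f i - a * b) :=
        Finset.sum_le_sum fun i hi => by
          nlinarith [mul_nonneg (sub_nonneg.mpr (h i hi).1) (sub_nonneg.mpr (h i hi).2)]
    _ = (a + b) * ∑ i ∈ s, f i - #s * (a * b) := by
        rw [Finset.sum_sub_distrib, Finset.mul_sum, Finset.sum_const, nsmul_eq_mul]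

theorem M1_le_of_degree_mem_Icc {V : Type*} [Fintype V] (G : SimpleGraph V) {a b : ℤ}
    (h : ∀ v, (G.degree v : ℤ) ∈ Set.Icc a b) :
    (M1 G : ℤ) ≤ (a + b) * (2 * #G.edgeFinset) - Fintype.card V * (a * b) := by
  have := Finset.univ.sum_sq_le_of_mem_Icc (fun v => (G.degree v : ℤ)) fun v _ => h v
  have hsum : ∑ v, (G.degree v : ℤ) = 2 * #G.edgeFinset := by
    exact_mod_cast G.sum_degrees_eq_twice_card_edges
  rw [hsum, Finset.card_univ] at this
  exact_mod_cast this

theorem stmt1 {V : Type*} [Fintype V] {n : ℕ} (hn : 2 ≤ n) (hcard : Fintype.card V = n)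
    (T : SimpleGraph V) (hT : T.IsTree) (hiso : ¬ Nonempty (T ≃g starGraph n)) :
    M1 T < M1 (starGraph n) ∧ M1 (starGraph n) = (n - 1) ^ 2 + (n - 1) := by
  subst hcard
  refine ⟨?_, M1_starGraph _⟩
  have : Nontrivial V := Fintype.one_lt_card_iff_nontrivial.mp hn
  have hdeg_pos (v : V) : 0 < T.degree v := hT.connected.preconnected.degree_pos_of_nontrivial v
  have hdeg_lt (v : V) : T.degree v < Fintype.card V - 1 := by
    refine (T.degree_lt_card_sub_one v).mpr fun hv => hiso ?_
    rw [hT.isAcyclic.eq_starGraph_of_isUniversal hv]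
    exact nonempty_iso_starGraph_card v
  obtain ⟨v⟩ := ‹Nontrivial V›.to_nonempty
  have hn3 : 3 ≤ Fintype.card V := by have := hdeg_pos v; have := hdeg_lt v; omega
  have hbound := M1_le_of_degree_mem_Icc T (a := 1) (b := Fintype.card V - 2) fun v =>
    ⟨by exact_mod_cast hdeg_pos v, by have := hdeg_lt v; omega⟩
  have hedges : (#T.edgeFinset : ℤ) = Fintype.card V - 1 := by
    have := hT.card_edgeFinset
    omega
  rw [hedges] at hbound
  rw [M1_starGraph]
  zify [show 1 ≤ Fintype.card V by omega]
  nlinarith
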